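/- arXiv:2305.17504 — 8 statements merged into one kernel-verified Lean document; each statement's English description precedes it below -/
import Mathlib

section
/- Let n ≥ 1 and 0 < i < n/2 with i not a unit of ℤ/nℤ. Then there exists a prime dividing n that does not divide i if and only if there exists b ∈ ℤ/nℤ with b not a unit and b - i a unit. -/
theorem stmt_2 (n i : ℕ) (hn : 1 ≤ n) (hi : 0 < i) (hi2 : 2 * i < n)
    (hiu : ¬ IsUnit (i : ZMod n)) :
    (∃ p : ℕ, p.Prime ∧ p ∣ n ∧ ¬ p ∣ i) ↔
      ∃ b : ZMod n, ¬ IsUnit b ∧ IsUnit (b - (i : ZMod n)) := by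
  haveI : NeZero n := ⟨by omega⟩
  constructor
  · rintro ⟨p, hp, hpn, hpi⟩
    have hn0 : n ≠ 0 := by omega
    set k := n.factorization p with hk
    have hk1 : 0 < k := hp.factorization_pos_of_dvd hn0 hpn
    set P := p ^ k with hP
    set m := n / P with hm
    have hcop : Nat.Coprime P m := (Nat.coprime_ordCompl hp hn0).pow_left k
    have hPm : P * m = n := Nat.ordProj_mul_ordCompl_eq_self n p
    obtain ⟨x, hx1, hx2⟩ := Nat.chineseRemainder hcop 0 (i + 1)
    set z := x % n + n with hz
    have hzx : z ≡ x [MOD n] := by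
      unfold Nat.ModEq
      rw [Nat.add_mod_right, Nat.mod_mod]
    have hzi : i < z := by
      have := Nat.zero_le (x % n)
      omega
    set y := z - i with hy
    have hzy : z = y + i := by omega
    -- z ≡ 0 mod P
    have hzP : z ≡ 0 [MOD P] := ((hzx.of_dvd ⟨m, hPm.symm⟩)).trans hx1
    have hzm : z ≡ i + 1 [MOD m] := (hzx.of_dvd ⟨P, by rw [← hPm]; ring⟩).trans hx2
    have hpP : p ∣ P := dvd_pow_self p (by omega)
    have hPz : P ∣ z := Nat.modEq_zero_iff_dvd.mp hzP
    have hpz : p ∣ z := hpP.trans hPz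
    refine ⟨(z : ZMod n), ?_, ?_⟩
    · rw [ZMod.isUnit_iff_coprime]
      intro hc
      have : p ∣ Nat.gcd z n := Nat.dvd_gcd hpz hpn
      rw [hc] at this
      exact hp.one_lt.ne' (Nat.dvd_one.mp this)
    · have hcast : (z : ZMod n) - (i : ZMod n) = ((y : ℕ) : ZMod n) := by
        rw [hzy]; push_cast; ring
      rw [hcast, ZMod.isUnit_iff_coprime]
      by_contra hc
      obtain ⟨q, hq, hqd⟩ := Nat.exists_prime_and_dvd hc
      have hqy : q ∣ y := hqd.trans (Nat.gcd_dvd_left _ _)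
      have hqn : q ∣ n := hqd.trans (Nat.gcd_dvd_right _ _)
      rw [← hPm] at hqn
      rcases (Nat.Prime.dvd_mul hq).mp hqn with hqP | hqm
      · have hqp : q = p := (Nat.prime_dvd_prime_iff_eq hq hp).mp (hq.dvd_of_dvd_pow hqP)
        subst hqp
        have : q ∣ z - y := Nat.dvd_sub (hpP.trans hPz) hqy
        rw [show z - y = i by omega] at this
        exact hpi this
      · have h1 : i ≡ z [MOD q] := (Nat.modEq_iff_dvd' (le_of_lt hzi)).mpr hqy
        have h2 : z ≡ i + 1 [MOD q] := hzm.of_dvd hqm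
        have : (i : ℕ) ≡ i + 1 [MOD q] := h1.trans h2
        have := (Nat.modEq_iff_dvd' (Nat.le_succ i)).mp this
        simp at this
        exact hq.one_lt.ne' this
  · rintro ⟨b, hb, hbu⟩
    have hv : ((b.val : ℕ) : ZMod n) = b := by rw [ZMod.natCast_val, ZMod.cast_id]
    have hnc : ¬ Nat.Coprime b.val n := by
      rw [← ZMod.isUnit_iff_coprime, hv]; exact hb
    obtain ⟨p, hp, hpd⟩ := Nat.exists_prime_and_dvd (fun h => hnc h)
    have hpv : p ∣ b.val := hpd.trans (Nat.gcd_dvd_left _ _)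
    have hpn : p ∣ n := hpd.trans (Nat.gcd_dvd_right _ _)
    refine ⟨p, hp, hpn, fun hpi => ?_⟩
    haveI : Fact p.Prime := ⟨hp⟩
    have := (ZMod.castHom hpn (ZMod p)).isUnit_map hbu
    rw [map_sub, ← hv, map_natCast, map_natCast] at this
    rw [(ZMod.natCast_eq_zero_iff _ _).mpr hpv,
      (ZMod.natCast_eq_zero_iff _ _).mpr hpi, sub_zero] at this
    exact not_isUnit_zero this
end

section
/- Let n, i, j be integers with gcd(n,i,j) = 1 and 0 < i < j ≤ n/2. If neither i nor j is a unit of ℤ/nℤ, then there exists a unit a of ℤ/nℤ such that a + i is not a unit of ℤ/nℤ. -/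
theorem stmt_3 (n i j : ℕ) (hgcd : Nat.gcd n (Nat.gcd i j) = 1)
    (hi : 0 < i) (hij : i < j) (hj : 2 * j ≤ n)
    (hiu : ¬ IsUnit (i : ZMod n)) (hju : ¬ IsUnit (j : ZMod n)) :
    ∃ a : ZMod n, IsUnit a ∧ ¬ IsUnit (a + (i : ZMod n)) := by
  have hn0 : n ≠ 0 := by omega
  haveI : NeZero n := ⟨hn0⟩
  -- get a prime q dividing both j and n
  have hjn : Nat.gcd j n ≠ 1 := by
    intro h
    exact hju ((ZMod.isUnit_iff_coprime j n).mpr h)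
  obtain ⟨q, hq, hqd⟩ := Nat.exists_prime_and_dvd hjn
  have hqj : q ∣ j := hqd.trans (Nat.gcd_dvd_left _ _)
  have hqn : q ∣ n := hqd.trans (Nat.gcd_dvd_right _ _)
  have hqi : ¬ q ∣ i := by
    intro h
    have : q ∣ 1 := hgcd ▸ Nat.dvd_gcd hqn (Nat.dvd_gcd h hqj)
    have := Nat.le_of_dvd one_pos this
    have := hq.two_le
    omega
  -- decompose n = A * B with A = q ^ k, coprime
  have key : ∃ A B : ℕ, 1 < A ∧ Nat.Coprime A B ∧ Nat.Coprime i A ∧ n = A * B := by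
    refine ⟨q ^ n.factorization q, n / q ^ n.factorization q, ?_, ?_, ?_, ?_⟩
    · have hk : 0 < n.factorization q := hq.factorization_pos_of_dvd hn0 hqn
      calc 1 < q := hq.one_lt
        _ = q ^ 1 := (pow_one q).symm
        _ ≤ q ^ n.factorization q := Nat.pow_le_pow_right hq.pos hk
    · exact Nat.Coprime.pow_left _ (Nat.coprime_ordCompl hq hn0)
    · exact Nat.Coprime.pow_right _ ((Nat.Prime.coprime_iff_not_dvd hq).mpr hqi).symm
    · exact (Nat.ordProj_mul_ordCompl_eq_self n q).symm
  obtain ⟨A, B, hA, hAB, hiA, hn⟩ := key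
  subst hn
  haveI : Fact (1 < A) := ⟨hA⟩
  let e := ZMod.chineseRemainder hAB
  refine ⟨e.symm (-(i : ZMod A), 1), ?_, ?_⟩
  · have h1 : IsUnit ((-(i : ZMod A), 1) : ZMod A × ZMod B) := by
      obtain ⟨u, hu⟩ := ((ZMod.isUnit_iff_coprime i A).mpr hiA).neg
      exact isUnit_iff_exists_inv.mpr ⟨((↑u⁻¹ : ZMod A), 1), by
        simp [Prod.ext_iff, ← hu]⟩
    have := h1.map e.symm.toRingHom
    simpa using this
  · intro h
    have h2 := h.map e.toRingHom
    have he : e (e.symm (-(i : ZMod A), 1) + (i : ZMod (A * B)))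
        = ((0 : ZMod A), 1 + (i : ZMod B)) := by
      rw [map_add, RingEquiv.apply_symm_apply, map_natCast]
      simp [Prod.ext_iff]
    rw [RingEquiv.toRingHom_eq_coe] at h2
    rw [RingEquiv.coe_toRingHom] at h2
    rw [he] at h2
    have h3 := h2.map (RingHom.fst (ZMod A) (ZMod B))
    simp at h3
end

section
/- Let n ≥ 6 and let i,j be integers with 0 < i < j < n/2, gcd(n,i,j)=1, and i + j = n/2. Then in the circulant graph C_n(i,j), for every a ∈ ℤ/nℤ, the vertices a and a + n/2 are nonadjacent twins. -/
/-!
Write `h = i + j`, so that `h + h = 0`. Translation by `h` permutes the connection set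
`{±i, ±j}` (`i ↦ -j ↦ i`, `-i ↦ j ↦ -i`), hence `a` and `a + h` have the same neighbours;
and `a - (a + h) = -h` lies in the connection set only if one of `i`, `j`, `2i + j`, `i + 2j`
vanishes, which the bounds `0 < i < j` and `2(i + j) = n` rule out.
-/

/-- The two-generator circulant graph `C_n(i,j)` on `ℤ/nℤ`:
distinct `a, b` are adjacent iff `a - b ∈ {i, -i, j, -j}`. -/
def circulant (n : ℕ) (i j : ZMod n) : SimpleGraph (ZMod n) where
  Adj a b := a ≠ b ∧ (a - b = i ∨ a - b = -i ∨ a - b = j ∨ a - b = -j)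
  symm := by
    constructor
    rintro a b ⟨hab, h⟩
    refine ⟨fun h' => hab h'.symm, ?_⟩
    have hba : b - a = -(a - b) := by ring
    rcases h with h | h | h | h <;> rw [hba, h] <;> simp
  loopless := by constructor; rintro a ⟨h, -⟩; exact h rfl

theorem circulant_adj_iff {n : ℕ} {i j : ZMod n} (hi : i ≠ 0) (hj : j ≠ 0) {a b : ZMod n} :
    (circulant n i j).Adj a b ↔ a - b = i ∨ a - b = -i ∨ a - b = j ∨ a - b = -j := by
  refine ⟨And.right, fun hd => ⟨?_, hd⟩⟩
  rintro rfl
  rw [sub_self] at hd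
  rcases hd with hd | hd | hd | hd
  exacts [hi hd.symm, hi (neg_eq_zero.mp hd.symm), hj hd.symm, hj (neg_eq_zero.mp hd.symm)]

theorem add_mem_connectionSet_iff {G : Type*} [AddCommGroup G] {i j : G}
    (h : (i + j) + (i + j) = 0) (d : G) :
    (d + (i + j) = i ∨ d + (i + j) = -i ∨ d + (i + j) = j ∨ d + (i + j) = -j) ↔
      (d = i ∨ d = -i ∨ d = j ∨ d = -j) := by
  -- translation by `i + j` is an involution, so one direction suffices
  suffices hmem : ∀ x : G, (x = i ∨ x = -i ∨ x = j ∨ x = -j) →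
      (x + (i + j) = i ∨ x + (i + j) = -i ∨ x + (i + j) = j ∨ x + (i + j) = -j) by
    refine ⟨fun hd => ?_, hmem d⟩
    simpa only [add_assoc, h, add_zero] using hmem _ hd
  rintro x (e | e | e | e)
  · exact Or.inr (Or.inr (Or.inr (by linear_combination (norm := module) e + h)))
  · exact Or.inr (Or.inr (Or.inl (by linear_combination (norm := module) e)))
  · exact Or.inr (Or.inl (by linear_combination (norm := module) e + h))
  · exact Or.inl (by linear_combination (norm := module) e)

theorem circulant_neighborSet_add_eq {n : ℕ} {i j : ZMod n} (hi : i ≠ 0) (hj : j ≠ 0)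
    (h : (i + j) + (i + j) = 0) (a : ZMod n) :
    (circulant n i j).neighborSet (a + (i + j)) = (circulant n i j).neighborSet a := by
  ext b
  simp only [SimpleGraph.mem_neighborSet, circulant_adj_iff hi hj, add_sub_right_comm]
  exact add_mem_connectionSet_iff h (a - b)

theorem circulant_not_adj_add {n : ℕ} {i j : ZMod n} (hi : i ≠ 0) (hj : j ≠ 0)
    (h₁ : i + i + j ≠ 0) (h₂ : i + j + j ≠ 0) (a : ZMod n) :
    ¬ (circulant n i j).Adj a (a + (i + j)) := by
  rw [circulant_adj_iff hi hj, sub_add_cancel_left]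
  rintro (e | e | e | e)
  · exact h₁ (by linear_combination -e)
  · exact hj (by linear_combination -e)
  · exact h₂ (by linear_combination -e)
  · exact hi (by linear_combination -e)

theorem ZMod.natCast_ne_zero_of_pos_of_lt {n k : ℕ} (hk : 0 < k) (hkn : k < n) :
    (k : ZMod n) ≠ 0 := by
  rw [Ne, ZMod.natCast_eq_zero_iff]
  exact fun hdvd => (Nat.le_of_dvd hk hdvd).not_gt hkn

theorem stmt_10_general (n i j : ℕ) (hi : 0 < i) (hij : i < j)
    (hsum : 2 * (i + j) = n) :
    ∀ a : ZMod n,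
      ¬ (circulant n (i : ZMod n) (j : ZMod n)).Adj a (a + ((n / 2 : ℕ) : ZMod n)) ∧
      (circulant n (i : ZMod n) (j : ZMod n)).neighborSet a =
        (circulant n (i : ZMod n) (j : ZMod n)).neighborSet (a + ((n / 2 : ℕ) : ZMod n)) := by
  intro a
  have hhalf : ((n / 2 : ℕ) : ZMod n) = i + j := by
    rw [show n / 2 = i + j by omega, Nat.cast_add]
  have hhalf_add : ((i : ZMod n) + j) + (i + j) = 0 := by
    have h2 : ((2 * (i + j) : ℕ) : ZMod n) = 0 := by rw [hsum, ZMod.natCast_self]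
    push_cast at h2
    linear_combination h2
  have hi' : (i : ZMod n) ≠ 0 := ZMod.natCast_ne_zero_of_pos_of_lt hi (by omega)
  have hj' : (j : ZMod n) ≠ 0 := ZMod.natCast_ne_zero_of_pos_of_lt (by omega) (by omega)
  have h₁ : ((i + i + j : ℕ) : ZMod n) ≠ 0 :=
    ZMod.natCast_ne_zero_of_pos_of_lt (by omega) (by omega)
  have h₂ : ((i + j + j : ℕ) : ZMod n) ≠ 0 :=
    ZMod.natCast_ne_zero_of_pos_of_lt (by omega) (by omega)
  push_cast at h₁ h₂
  rw [hhalf, circulant_neighborSet_add_eq hi' hj' hhalf_add]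
  exact ⟨circulant_not_adj_add hi' hj' h₁ h₂ a, rfl⟩

theorem stmt_10 (n i j : ℕ) (hn : 6 ≤ n) (hi : 0 < i) (hij : i < j)
    (hj : 2 * j < n) (hgcd : Nat.gcd n (Nat.gcd i j) = 1)
    (hsum : 2 * (i + j) = n) :
    ∀ a : ZMod n,
      ¬ (circulant n (i : ZMod n) (j : ZMod n)).Adj a (a + ((n / 2 : ℕ) : ZMod n)) ∧
      (circulant n (i : ZMod n) (j : ZMod n)).neighborSet a =
        (circulant n (i : ZMod n) (j : ZMod n)).neighborSet (a + ((n / 2 : ℕ) : ZMod n)) :=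
  stmt_10_general n i j hi hij hsum
end

section
/- Let n ≥ 8 be even, j = n/2, and let i be an integer with 0 < i < j, gcd(n,i,j) = 1, and (n,i,j) ≠ (6,1,3). Then in the circulant graph C_n(i,j), for every vertex a, N(a) ∩ N(a+2i) = {a+i}. -/
/-!
A common neighbour `x` of `a` and `a + 2i` gives `s = a - x` and `t = s + 2i`, both in
`{±i, j}` since `j = -j`. Apart from `s = -i`, `t = i`, every choice forces `4i = 0` or
`3i = j` in `ℤ/nℤ`; for `0 < i < n/2` these say `4i = n` or `3i = n/2`, so `i ∣ n/2`,
the gcd condition gives `i = 1`, and `n ∈ {4, 6}`.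
-/

theorem circulant_neighborSet_inter_neighborSet_add_two_mul {n : ℕ} {i j : ZMod n}
    (hj : -j = j) (h4i : 4 * i ≠ 0) (h3i : 3 * i ≠ j) (a : ZMod n) :
    (circulant n i j).neighborSet a ∩ (circulant n i j).neighborSet (a + 2 * i) = {a + i} := by
  have hi : i ≠ 0 := by rintro rfl; simp at h4i
  ext x
  simp only [Set.mem_inter_iff, SimpleGraph.mem_neighborSet, Set.mem_singleton_iff]
  constructor
  · rintro ⟨⟨-, hx⟩, -, hx'⟩
    grind
  · rintro rfl
    exact ⟨⟨by grind, Or.inr (Or.inl (by ring))⟩, by grind, Or.inl (by ring)⟩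

lemma Nat.eq_one_of_dvd_of_gcd_gcd_eq_one {n m i : ℕ} (hm : m ∣ n) (hi : i ∣ m)
    (h : n.gcd (i.gcd m) = 1) : i = 1 :=
  Nat.dvd_one.mp (h ▸ Nat.dvd_gcd (hi.trans hm) (Nat.dvd_gcd dvd_rfl hi))

lemma ZMod.natCast_ne_zero_of_lt_two_mul {n m : ℕ} (h0 : m ≠ 0) (h2 : m < 2 * n)
    (hn : m ≠ n) : (m : ZMod n) ≠ 0 :=
  fun h => hn (Nat.eq_of_dvd_of_lt_two_mul h0 ((ZMod.natCast_eq_zero_iff m n).mp h) h2)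

theorem stmt_12_general (n i : ℕ) (hn : 8 ≤ n) (hne : Even n) (hi : 0 < i)
    (hij : i < n / 2) (hgcd : Nat.gcd n (Nat.gcd i (n / 2)) = 1) :
    ∀ a : ZMod n,
      (circulant n (i : ZMod n) ((n / 2 : ℕ) : ZMod n)).neighborSet a ∩
        (circulant n (i : ZMod n) ((n / 2 : ℕ) : ZMod n)).neighborSet (a + 2 * (i : ZMod n)) =
      {a + (i : ZMod n)} := by
  set j := n / 2
  have hn2 : n = j + j := by grind
  have hi_one (k : ℕ) (hk : k * i = j) : i = 1 :=
    Nat.eq_one_of_dvd_of_gcd_gcd_eq_one (Nat.div_dvd_of_dvd (even_iff_two_dvd.mp hne))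
      (Dvd.intro_left k hk) hgcd
  have hjj : (j : ZMod n) + j = 0 := by rw [← Nat.cast_add, ← hn2, ZMod.natCast_self]
  apply circulant_neighborSet_inter_neighborSet_add_two_mul (neg_eq_of_add_eq_zero_right hjj)
  · exact_mod_cast ZMod.natCast_ne_zero_of_lt_two_mul (m := 4 * i) (by omega) (by omega)
      fun h => by have := hi_one 2 (by omega); omega
  · intro h3i
    refine ZMod.natCast_ne_zero_of_lt_two_mul (n := n) (m := 3 * i + j) (by omega) (by omega)
      (fun h => by have := hi_one 3 (by omega); omega) ?_
    push_cast
    rw [h3i, hjj]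

theorem stmt_12 (n i : ℕ) (hn : 8 ≤ n) (hne : Even n) (hi : 0 < i)
    (hij : i < n / 2) (hgcd : Nat.gcd n (Nat.gcd i (n / 2)) = 1)
    (hspecial : (n, i, n / 2) ≠ (6, 1, 3)) :
    ∀ a : ZMod n,
      (circulant n (i : ZMod n) ((n / 2 : ℕ) : ZMod n)).neighborSet a ∩
        (circulant n (i : ZMod n) ((n / 2 : ℕ) : ZMod n)).neighborSet (a + 2 * (i : ZMod n)) =
      {a + (i : ZMod n)} :=
  stmt_12_general n i hn hne hi hij hgcd
end

section
/- Let n be even, j = n/2, 0 < i < j, gcd(n,i,j) = 1, and (n,i,j) ≠ (6,1,3) with n ≥ 6. Then in C_n(i,j), for every vertex a, N(a) ∩ N(a+i+j) = {a+i, a+j}. -/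
namespace circulant

theorem neighborSet_inter_neighborSet_add_add {n : ℕ} {i j : ZMod n} (hjj : j + j = 0)
    (hj : j ≠ 0) (hii : i + i ≠ 0) (hij : i + j ≠ 0) (hiiij : i + i + i + j ≠ 0) (a : ZMod n) :
    (circulant n i j).neighborSet a ∩ (circulant n i j).neighborSet (a + i + j) =
      {a + i, a + j} := by
  have hi : i ≠ 0 := fun h => hii (by rw [h, add_zero])
  ext x
  simp only [Set.mem_inter_iff, SimpleGraph.mem_neighborSet, circulant, Set.mem_insert_iff,
    Set.mem_singleton_iff]
  constructor
  · rintro ⟨⟨-, hx | hx | hx | hx⟩, -, hy⟩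
    · exfalso
      rcases hy with hy | hy | hy | hy
      · exact hij (by linear_combination hy - hx)
      · exact hiiij (by linear_combination hy - hx)
      · exact hii (by linear_combination hy - hx)
      · exact hii (by linear_combination hy - hx - hjj)
    · exact .inl (by linear_combination -hx)
    · exact .inr (by linear_combination -hx - hjj)
    · exact .inr (by linear_combination -hx)
  · rintro (rfl | rfl)
    · exact ⟨⟨fun h => hi (by linear_combination -h), .inr (.inl (by ring))⟩,
        fun h => hj (by linear_combination h), .inr (.inr (.inl (by ring)))⟩
    · exact ⟨⟨fun h => hj (by linear_combination -h), .inr (.inr (.inr (by ring)))⟩,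
        fun h => hi (by linear_combination h), .inl (by ring)⟩

end circulant

theorem Nat.not_dvd_three_mul_add_half {n i : ℕ} (hne : Even n) (hi : 0 < i) (hij : i < n / 2)
    (hgcd : Nat.gcd n (Nat.gcd i (n / 2)) = 1) (hspecial : (n, i, n / 2) ≠ (6, 1, 3)) :
    ¬ n ∣ 3 * i + n / 2 := by
  obtain ⟨j, rfl⟩ := hne
  have hhalf : (j + j) / 2 = j := by omega
  rw [hhalf] at hij hgcd hspecial ⊢
  rintro ⟨c, hc⟩
  have hc1 : c = 1 := by
    rcases c with _ | _ | c
    · omega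
    · rfl
    · nlinarith
  have hj : j = 3 * i := by subst hc1; omega
  subst hj
  have hgcd_eq : Nat.gcd (3 * i + 3 * i) (Nat.gcd i (3 * i)) = i := by
    rw [Nat.gcd_eq_left (dvd_mul_left i 3), Nat.gcd_eq_right ⟨6, by ring⟩]
  rw [hgcd_eq] at hgcd
  subst hgcd
  exact hspecial rfl

theorem stmt_13_general (n i : ℕ) (hne : Even n) (hi : 0 < i)
    (hij : i < n / 2) (hgcd : Nat.gcd n (Nat.gcd i (n / 2)) = 1)
    (hspecial : (n, i, n / 2) ≠ (6, 1, 3)) :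
    ∀ a : ZMod n,
      (circulant n (i : ZMod n) ((n / 2 : ℕ) : ZMod n)).neighborSet a ∩
        (circulant n (i : ZMod n) ((n / 2 : ℕ) : ZMod n)).neighborSet
          (a + (i : ZMod n) + ((n / 2 : ℕ) : ZMod n)) =
      {a + (i : ZMod n), a + ((n / 2 : ℕ) : ZMod n)} := by
  have hhalf : n / 2 + n / 2 = n := by have := Nat.even_iff.mp hne; omega
  have ne_zero {k : ℕ} (hk : 0 < k) (hkn : k < n) : (k : ZMod n) ≠ 0 :=
    ZMod.natCast_ne_zero_of_pos_of_lt hk hkn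
  refine circulant.neighborSet_inter_neighborSet_add_add ?_ (ne_zero (by omega) (by omega))
    ?_ ?_ ?_
  · rw [← Nat.cast_add, hhalf, ZMod.natCast_self]
  · exact_mod_cast ne_zero (k := i + i) (by omega) (by omega)
  · exact_mod_cast ne_zero (k := i + n / 2) (by omega) (by omega)
  · have h := mt (ZMod.natCast_eq_zero_iff _ n).mp
      (Nat.not_dvd_three_mul_add_half hne hi hij hgcd hspecial)
    push_cast at h
    convert h using 1
    ring

theorem stmt_13 (n i : ℕ) (hn : 6 ≤ n) (hne : Even n) (hi : 0 < i)
    (hij : i < n / 2) (hgcd : Nat.gcd n (Nat.gcd i (n / 2)) = 1)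
    (hspecial : (n, i, n / 2) ≠ (6, 1, 3)) :
    ∀ a : ZMod n,
      (circulant n (i : ZMod n) ((n / 2 : ℕ) : ZMod n)).neighborSet a ∩
        (circulant n (i : ZMod n) ((n / 2 : ℕ) : ZMod n)).neighborSet
          (a + (i : ZMod n) + ((n / 2 : ℕ) : ZMod n)) =
      {a + (i : ZMod n), a + ((n / 2 : ℕ) : ZMod n)} :=
  stmt_13_general n i hne hi hij hgcd hspecial
end

section
/- Let n = 2m with m ≥ 2 and suppose i + j = m with 0 < i < j < m and gcd(n,i,j) = 1. Then gcd(i,j) = 1, and at least one of i, j is a unit of ℤ/nℤ; moreover if i is a unit then C_n(i,j) is isomorphic to C_{2m}(1, m-1). -/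
def circulantMulIso {n : ℕ} (u : (ZMod n)ˣ) (i j : ZMod n) :
    circulant n i j ≃g circulant n (u * i) (u * j) where
  toEquiv := Units.mulLeft u
  map_rel_iff' {a b} := by
    simp only [circulant, Units.mulLeft_apply, ← mul_sub, ← mul_neg, Units.mul_right_inj, ne_eq]

theorem ZMod.isUnit_natCast_two_mul_iff {m a : ℕ} :
    IsUnit (a : ZMod (2 * m)) ↔ Odd a ∧ a.Coprime m := by
  rw [ZMod.isUnit_iff_coprime, Nat.coprime_mul_iff_right, Nat.coprime_two_right]

theorem ZMod.natCast_mul_sub_one_eq_of_odd {m i j : ℕ} (hsum : i + j = m) (hi : Odd i) :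
    (i : ZMod (2 * m)) * ((m - 1 : ℕ) : ZMod (2 * m)) = j := by
  obtain ⟨k, rfl⟩ := hi
  have h2m : (2 * m : ZMod (2 * m)) = 0 := by exact_mod_cast ZMod.natCast_self (2 * m)
  have hsum' : ((2 * k + 1 : ℕ) : ZMod (2 * m)) + j = m := by rw [← Nat.cast_add, hsum]
  push_cast [show 1 ≤ m by omega] at hsum' ⊢
  linear_combination (k : ZMod (2 * m)) * h2m - hsum'

theorem Nat.odd_or_odd_of_coprime {i j : ℕ} (h : i.Coprime j) : Odd i ∨ Odd j := by
  by_contra! hev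
  simp only [Nat.not_odd_iff_even] at hev
  have := Nat.dvd_gcd hev.1.two_dvd hev.2.two_dvd
  rw [h] at this
  omega

theorem stmt_16_general (m i j : ℕ) (hsum : i + j = m)
    (hgcd : Nat.gcd (2 * m) (Nat.gcd i j) = 1) :
    Nat.gcd i j = 1 ∧
    (IsUnit (i : ZMod (2 * m)) ∨ IsUnit (j : ZMod (2 * m))) ∧
    (IsUnit (i : ZMod (2 * m)) →
      Nonempty (circulant (2 * m) (i : ZMod (2 * m)) (j : ZMod (2 * m)) ≃g
        circulant (2 * m) 1 ((m - 1 : ℕ) : ZMod (2 * m)))) := by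
  have hdvd : Nat.gcd i j ∣ 2 * m :=
    hsum ▸ Dvd.dvd.mul_left (Nat.dvd_add (Nat.gcd_dvd_left i j) (Nat.gcd_dvd_right i j)) 2
  have hcop : i.Coprime j := by rwa [Nat.gcd_eq_right hdvd] at hgcd
  have hcim : i.Coprime m := hsum ▸ Nat.coprime_self_add_right.mpr hcop
  have hcjm : j.Coprime m := hsum ▸ Nat.coprime_add_self_right.mpr hcop.symm
  refine ⟨hcop, ?_, fun hunit => ?_⟩
  · rcases Nat.odd_or_odd_of_coprime hcop with hodd | hodd
    · exact .inl (ZMod.isUnit_natCast_two_mul_iff.mpr ⟨hodd, hcim⟩)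
    · exact .inr (ZMod.isUnit_natCast_two_mul_iff.mpr ⟨hodd, hcjm⟩)
  · set u := hunit.unit
    have hu_one : (u : ZMod (2 * m)) * 1 = i := by rw [mul_one, hunit.unit_spec]
    have hu_sub : (u : ZMod (2 * m)) * ((m - 1 : ℕ) : ZMod (2 * m)) = j := by
      rw [hunit.unit_spec]
      exact ZMod.natCast_mul_sub_one_eq_of_odd hsum (ZMod.isUnit_natCast_two_mul_iff.mp hunit).1
    exact ⟨(hu_one ▸ hu_sub ▸ circulantMulIso u 1 ((m - 1 : ℕ) : ZMod (2 * m))).symm⟩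

theorem stmt_16 (m i j : ℕ) (hm : 2 ≤ m) (hsum : i + j = m)
    (hi : 0 < i) (hij : i < j) (hj : j < m)
    (hgcd : Nat.gcd (2 * m) (Nat.gcd i j) = 1) :
    Nat.gcd i j = 1 ∧
    (IsUnit (i : ZMod (2 * m)) ∨ IsUnit (j : ZMod (2 * m))) ∧
    (IsUnit (i : ZMod (2 * m)) →
      Nonempty (circulant (2 * m) (i : ZMod (2 * m)) (j : ZMod (2 * m)) ≃g
        circulant (2 * m) 1 ((m - 1 : ℕ) : ZMod (2 * m)))) :=
  stmt_16_general m i j hsum hgcd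
end

section
/- For j ≥ 6, the only pair (s,t) with s ∈ ℤ/2jℤ and t ∈ {1,-1} such that the map a ↦ s + t·a preserves the set S = {0, 1, j+2, 3, 4, …, j-1} ⊆ ℤ/2jℤ is (s,t) = (0,1). -/
private lemma stmt17_modcases (a n : ℕ) (hn : 0 < n) (h : a < 2*n) :
    (a < n ∧ a % n = a) ∨ (n ≤ a ∧ a % n = a - n) := by
  rcases Nat.lt_or_ge a n with h' | h'
  · exact Or.inl ⟨h', Nat.mod_eq_of_lt h'⟩
  · exact Or.inr ⟨h', by rw [Nat.mod_eq_sub_mod h', Nat.mod_eq_of_lt (by omega)]⟩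

theorem stmt_17 (j : ℕ) (hj : 6 ≤ j)
    (S : Set (ZMod (2 * j)))
    (hS : S = {x : ZMod (2 * j) | ∃ k : ℕ, k < j ∧ k ≠ 2 ∧ x = (k : ZMod (2 * j))} ∪
      {((j : ZMod (2 * j)) + 2)}) :
    ∀ s t : ZMod (2 * j), (t = 1 ∨ t = -1) →
      (fun a => s + t * a) '' S = S → s = 0 ∧ t = 1 := by
  intro s t ht hst
  haveI : NeZero (2 * j) := ⟨by omega⟩
  have hjlt : j + 2 < 2 * j := by omega
  have hmem : ∀ x : ZMod (2*j), x ∈ S ↔ ((x.val < j ∧ x.val ≠ 2) ∨ x.val = j + 2) := by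
    intro x
    have hx : ((x.val : ℕ) : ZMod (2*j)) = x := by
      rw [ZMod.natCast_val, ZMod.cast_id]
    have hj2 : ((j : ZMod (2*j)) + 2) = ((j + 2 : ℕ) : ZMod (2*j)) := by push_cast; ring
    rw [hS]
    constructor
    · rintro (⟨k, hk, hk2, rfl⟩ | h)
      · left; rw [ZMod.val_cast_of_lt (by omega)]; exact ⟨hk, hk2⟩
      · right
        simp only [Set.mem_singleton_iff] at h
        rw [h, hj2, ZMod.val_cast_of_lt hjlt]
    · rintro (⟨h1, h2⟩ | h)
      · left; exact ⟨x.val, h1, h2, hx.symm⟩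
      · right
        simp only [Set.mem_singleton_iff]
        rw [← hx, h, hj2]
  have ht2 : t * t = 1 := by rcases ht with rfl | rfl <;> ring
  have hiff : ∀ a : ZMod (2*j), a ∈ S ↔ s + t * a ∈ S := by
    intro a
    constructor
    · intro ha; rw [← hst]; exact ⟨a, ha, rfl⟩
    · intro ha
      rw [← hst] at ha
      obtain ⟨b, hb, heq⟩ := ha
      simp only at heq
      have h1 : t * b = t * a := by
        have := add_left_cancel heq
        exact this
      have hba : b = a := by
        calc b = t * t * b := by rw [ht2, one_mul]
          _ = t * t * a := by rw [mul_assoc, h1, ← mul_assoc]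
          _ = a := by rw [ht2, one_mul]
      rwa [← hba]
  set σ := s.val with hσdef
  have hσlt : σ < 2 * j := ZMod.val_lt s
  have hval : ∀ c : ℕ, ((s + (c : ℕ) : ZMod (2*j))).val = (σ + c) % (2*j) := by
    intro c
    rw [ZMod.val_add, ZMod.val_natCast]
    conv_rhs => rw [Nat.add_mod, Nat.mod_eq_of_lt hσlt]
  have haddmem : ∀ c : ℕ, ((s + (c : ℕ) : ZMod (2*j)) ∈ S) ↔
      (((σ + c) % (2*j) < j ∧ (σ + c) % (2*j) ≠ 2) ∨ (σ + c) % (2*j) = j + 2) := by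
    intro c; rw [hmem, hval]
  have hcast : ∀ c : ℕ, c < 2*j → ((((c : ℕ) : ZMod (2*j)) ∈ S) ↔ ((c < j ∧ c ≠ 2) ∨ c = j + 2)) := by
    intro c hc; rw [hmem, ZMod.val_cast_of_lt hc]
  rcases ht with rfl | rfl
  · -- t = 1
    refine ⟨?_, rfl⟩
    have key : ∀ c : ℕ, c < 2*j → (((c < j ∧ c ≠ 2) ∨ c = j + 2) ↔
        (((σ + c) % (2*j) < j ∧ (σ + c) % (2*j) ≠ 2) ∨ (σ + c) % (2*j) = j + 2)) := by
      intro c hc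
      rw [← hcast c hc, ← haddmem c]
      have := hiff ((c : ℕ) : ZMod (2*j))
      rw [one_mul] at this
      exact this
    have k0 := key 0 (by omega)
    have k1 := key 1 (by omega)
    have k2 := key 2 (by omega)
    have k4 := key (2*j-1) (by omega)
    have m0 := stmt17_modcases (σ + 0) (2*j) (by omega) (by omega)
    have m1 := stmt17_modcases (σ + 1) (2*j) (by omega) (by omega)
    have m2 := stmt17_modcases (σ + 2) (2*j) (by omega) (by omega)
    have m4 := stmt17_modcases (σ + (2*j-1)) (2*j) (by omega) (by omega)
    have l0 : (σ + 0) % (2*j) < 2*j := Nat.mod_lt _ (by omega)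
    have l1 : (σ + 1) % (2*j) < 2*j := Nat.mod_lt _ (by omega)
    have l2 : (σ + 2) % (2*j) < 2*j := Nat.mod_lt _ (by omega)
    have l4 : (σ + (2*j-1)) % (2*j) < 2*j := Nat.mod_lt _ (by omega)
    rcases m0 with ⟨b0, m0⟩ | ⟨b0, m0⟩ <;> rw [m0] at k0 l0 <;>
      rcases m1 with ⟨b1, m1⟩ | ⟨b1, m1⟩ <;> rw [m1] at k1 l1 <;>
        rcases m2 with ⟨b2, m2⟩ | ⟨b2, m2⟩ <;> rw [m2] at k2 l2 <;>
          rcases m4 with ⟨b4, m4⟩ | ⟨b4, m4⟩ <;> rw [m4] at k4 l4 <;>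
            (have hσ0 : σ = 0 := by omega
             rw [hσdef] at hσ0
             exact (ZMod.val_eq_zero s).mp hσ0)
  · -- t = -1
    exfalso
    have hneg : ∀ c : ℕ, c ≤ 2*j → s + (-1) * ((c : ℕ) : ZMod (2*j)) = s + ((2*j - c : ℕ) : ZMod (2*j)) := by
      intro c hc
      have : ((2*j - c : ℕ) : ZMod (2*j)) = -((c : ℕ) : ZMod (2*j)) := by
        rw [Nat.cast_sub hc, ZMod.natCast_self]; ring
      rw [this]; ring
    have key : ∀ c : ℕ, c < 2*j → (((c < j ∧ c ≠ 2) ∨ c = j + 2) ↔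
        (((σ + (2*j - c)) % (2*j) < j ∧ (σ + (2*j - c)) % (2*j) ≠ 2) ∨ (σ + (2*j - c)) % (2*j) = j + 2)) := by
      intro c hc
      rw [← hcast c hc, ← haddmem (2*j - c)]
      have := hiff ((c : ℕ) : ZMod (2*j))
      rw [hneg c (by omega)] at this
      exact this
    have k0 := key 0 (by omega)
    have k1 := key 1 (by omega)
    have k2 := key 2 (by omega)
    have k3 := key 3 (by omega)
    have k4 := key (2*j-1) (by omega)
    have m0 := stmt17_modcases (σ + (2*j - 0)) (2*j) (by omega) (by omega)
    have m1 := stmt17_modcases (σ + (2*j - 1)) (2*j) (by omega) (by omega)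
    have m2 := stmt17_modcases (σ + (2*j - 2)) (2*j) (by omega) (by omega)
    have m3 := stmt17_modcases (σ + (2*j - 3)) (2*j) (by omega) (by omega)
    have m4 := stmt17_modcases (σ + (2*j - (2*j-1))) (2*j) (by omega) (by omega)
    have l0 : (σ + (2*j - 0)) % (2*j) < 2*j := Nat.mod_lt _ (by omega)
    have l1 : (σ + (2*j - 1)) % (2*j) < 2*j := Nat.mod_lt _ (by omega)
    have l2 : (σ + (2*j - 2)) % (2*j) < 2*j := Nat.mod_lt _ (by omega)
    have l3 : (σ + (2*j - 3)) % (2*j) < 2*j := Nat.mod_lt _ (by omega)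
    have l4 : (σ + (2*j - (2*j-1))) % (2*j) < 2*j := Nat.mod_lt _ (by omega)
    rcases m0 with ⟨b0, m0⟩ | ⟨b0, m0⟩ <;> rw [m0] at k0 l0 <;>
      rcases m1 with ⟨b1, m1⟩ | ⟨b1, m1⟩ <;> rw [m1] at k1 l1 <;>
        rcases m2 with ⟨b2, m2⟩ | ⟨b2, m2⟩ <;> rw [m2] at k2 l2 <;>
          rcases m3 with ⟨b3, m3⟩ | ⟨b3, m3⟩ <;> rw [m3] at k3 l3 <;>
            rcases m4 with ⟨b4, m4⟩ | ⟨b4, m4⟩ <;> rw [m4] at k4 l4 <;>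
              omega
end

section
/- The relation on vertices of a simple graph G defined by x ~ y iff x = y, or N(x) = N(y), or N[x] = N[y], is an equivalence relation. -/
private lemma aux_19 {V : Type*} (G : SimpleGraph V) {x y z : V}
    (h1 : G.neighborSet x = G.neighborSet y)
    (h2 : insert y (G.neighborSet y) = insert z (G.neighborSet z)) :
    x = z ∨ G.neighborSet x = G.neighborSet z ∨
      insert x (G.neighborSet x) = insert z (G.neighborSet z) := by
  by_cases hyz : y = z
  · subst hyz; exact Or.inr (Or.inl h1)
  · have hy : y ∈ insert z (G.neighborSet z) := by
      rw [← h2]; exact Set.mem_insert _ _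
    rcases hy with hy | hy
    · exact absurd hy hyz
    · -- G.Adj z y, so z ∈ N(y) = N(x), hence G.Adj x z, x ∈ N(z)
      have hz : z ∈ G.neighborSet x := by
        rw [h1]; exact (G.adj_symm hy)
      have hx : x ∈ insert y (G.neighborSet y) := by
        rw [h2]; exact Set.mem_insert_iff.mpr (Or.inr (G.adj_symm hz))
      rcases hx with hx | hx
      · subst hx; exact Or.inr (Or.inr h2)
      · rw [← h1] at hx
        exact absurd hx (G.irrefl)

theorem stmt_19 {V : Type*} (G : SimpleGraph V) :
    Equivalence (fun x y : V => x = y ∨ G.neighborSet x = G.neighborSet y ∨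
      insert x (G.neighborSet x) = insert y (G.neighborSet y)) := by
  constructor
  · intro x; exact Or.inl rfl
  · rintro x y (h | h | h)
    · exact Or.inl h.symm
    · exact Or.inr (Or.inl h.symm)
    · exact Or.inr (Or.inr h.symm)
  · rintro x y z (h1 | h1 | h1) (h2 | h2 | h2)
    · exact Or.inl (h1.trans h2)
    · subst h1; exact Or.inr (Or.inl h2)
    · subst h1; exact Or.inr (Or.inr h2)
    · subst h2; exact Or.inr (Or.inl h1)
    · exact Or.inr (Or.inl (h1.trans h2))
    · exact aux_19 G h1 h2
    · subst h2; exact Or.inr (Or.inr h1)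
    · -- closed then open: use aux on reversed
      rcases aux_19 G h2.symm h1.symm with h | h | h
      · exact Or.inl h.symm
      · exact Or.inr (Or.inl h.symm)
      · exact Or.inr (Or.inr h.symm)
    · exact Or.inr (Or.inr (h1.trans h2))
end
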